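/- Consider a birth-death process on X = ℕ₀ with rates k(x,x+1) = a(x), k(x,x−1) = b(x) (b(0) = 0, b(x) > 0 for x ≥ 1, a(x) > 0 for all x) and k(x,y) = 0 for |x−y| > 1, x ≠ y. Assume the rates are monotone, a(x+1) ≤ a(x) and b(x+1) ≥ b(x) for all x ∈ ℕ₀, and that a(x) − a(x+1) + b(x+1) − b(x) ≥ κ for all x ∈ ℕ₀ and some κ > 0. Then there exists no n ∈ [1,∞) such that Ψ_{2,Υ}(f)(x) ≥ (1/n)·(L f(x))² holds for all bounded f : ℕ₀ → ℝ and all x ∈ ℕ₀ with −L f(x) > 0. In particular, L satisfies CD_Υ(0,n) for no n ∈ [1,∞). -/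

import Mathlib

open Real Filter MeasureTheory Set

/-- `Υ(r) = e^r - r - 1`. -/
noncomputable def Ups (r : ℝ) : ℝ := Real.exp r - r - 1

/-- Boundedness of a real-valued function on the state space. -/
def BddFun {X : Type*} (f : X → ℝ) : Prop := ∃ B : ℝ, ∀ x, |f x| ≤ B

/-- The birth-death generator on `ℕ₀`:
`L f(x) = a(x)(f(x+1)-f(x)) + b(x)(f(x-1)-f(x))` (with `b(0) = 0`). -/
noncomputable def genBD (a b : ℕ → ℝ) (f : ℕ → ℝ) (x : ℕ) : ℝ :=
  a x * (f (x + 1) - f x) + b x * (f (x - 1) - f x)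

/-- `Ψ_Υ(f)(x) = a(x) Υ(f(x+1)-f(x)) + b(x) Υ(f(x-1)-f(x))`. -/
noncomputable def psiUpsBD (a b : ℕ → ℝ) (f : ℕ → ℝ) (x : ℕ) : ℝ :=
  a x * Ups (f (x + 1) - f x) + b x * Ups (f (x - 1) - f x)

/-- `B_{Υ'}(f,g)(x)` for the birth-death generator. -/
noncomputable def bUpsBD (a b : ℕ → ℝ) (f g : ℕ → ℝ) (x : ℕ) : ℝ :=
  a x * (Real.exp (f (x + 1) - f x) - 1) * (g (x + 1) - g x) +
    b x * (Real.exp (f (x - 1) - f x) - 1) * (g (x - 1) - g x)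

/-- `Ψ_{2,Υ}(f) = (1/2)(L Ψ_Υ(f) - B_{Υ'}(f,Lf))` for the birth-death generator. -/
noncomputable def psi2UpsBD (a b : ℕ → ℝ) (f : ℕ → ℝ) (x : ℕ) : ℝ :=
  (1/2) * (genBD a b (psiUpsBD a b f) x - bUpsBD a b f (genBD a b f) x)

/-!
Test `Ψ_{2,Υ}` on the step function `f = -√n · 𝟙_{[0,k]}` at `x = k + 1`. There
`Lf(x) = -√n b(x)`, so `(1/n) (Lf(x))² = b(x)²`, whereas
`2 Ψ_{2,Υ}(f)(x) ≤ b(x) (a(x-1) e^{√n} + b(x))`. Telescoping the gap condition gives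
`b(x) ≥ κ x - a(0) → ∞`, while `a(x-1) ≤ a(0)`; hence `a(x-1) e^{√n} < b(x)` for large `x`,
and the dimension inequality fails there.
-/

lemma Ups_nonneg (r : ℝ) : 0 ≤ Ups r := by
  unfold Ups
  linarith [add_one_le_exp r]

def stepFun (s : ℝ) (k : ℕ) : ℕ → ℝ := fun y => if y ≤ k then -s else 0

lemma stepFun_of_le {s : ℝ} {k y : ℕ} (h : y ≤ k) : stepFun s k y = -s := if_pos h

lemma stepFun_of_lt {s : ℝ} {k y : ℕ} (h : k < y) : stepFun s k y = 0 := if_neg h.not_ge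

lemma bddFun_stepFun (s : ℝ) (k : ℕ) : BddFun (stepFun s k) :=
  ⟨|s|, fun y => by unfold stepFun; split_ifs <;> simp⟩

section BirthDeath

variable (a b : ℕ → ℝ)

lemma genBD_stepFun_succ (s : ℝ) (k : ℕ) :
    genBD a b (stepFun s k) (k + 1) = -(b (k + 1) * s) := by
  simp (disch := omega) only [genBD, stepFun_of_le, stepFun_of_lt, Nat.add_sub_cancel]
  ring

lemma two_mul_psi2UpsBD_stepFun_succ (s : ℝ) (k : ℕ) :
    2 * psi2UpsBD a b (stepFun s k) (k + 1) =
      b (k + 1) * (a k * (exp s - 1 - s * exp (-s)) + b (k + 1) * (1 - exp (-s) - s * exp (-s))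
        - a (k + 1) * Ups (-s)) := by
  simp (disch := omega) only [psi2UpsBD, genBD, psiUpsBD, bUpsBD, stepFun_of_le, stepFun_of_lt,
    Nat.add_sub_cancel]
  simp only [Ups, sub_zero, zero_sub, neg_neg, sub_self, exp_zero]
  ring

lemma psi2UpsBD_stepFun_succ_le {s : ℝ} (hs : 0 ≤ s) {k : ℕ} (ha : ∀ x, 0 ≤ a x)
    (hb : 0 ≤ b (k + 1)) :
    psi2UpsBD a b (stepFun s k) (k + 1) ≤ b (k + 1) * (a k * exp s + b (k + 1)) / 2 := by
  have hsE : 0 ≤ s * exp (-s) := mul_nonneg hs (exp_pos _).le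
  have hbirth : a k * (exp s - 1 - s * exp (-s)) ≤ a k * exp s :=
    mul_le_mul_of_nonneg_left (by linarith) (ha k)
  have hdeath : b (k + 1) * (1 - exp (-s) - s * exp (-s)) ≤ b (k + 1) :=
    mul_le_of_le_one_right hb (by linarith [exp_pos (-s)])
  have hUps : 0 ≤ a (k + 1) * Ups (-s) := mul_nonneg (ha _) (Ups_nonneg _)
  have hbracket : a k * (exp s - 1 - s * exp (-s)) + b (k + 1) * (1 - exp (-s) - s * exp (-s))
      - a (k + 1) * Ups (-s) ≤ a k * exp s + b (k + 1) := by
    linarith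
  linarith [mul_le_mul_of_nonneg_left hbracket hb, two_mul_psi2UpsBD_stepFun_succ a b s k]

variable {a b}

lemma le_sub_add_of_gap (hb0 : b 0 = 0) {κ : ℝ}
    (hgap : ∀ x, κ ≤ a x - a (x + 1) + b (x + 1) - b x) (x : ℕ) :
    κ * x ≤ a 0 - a x + b x := by
  induction x with
  | zero => simp [hb0]
  | succ k ih => push_cast; linarith [hgap k]

lemma tendsto_atTop_of_gap (hb0 : b 0 = 0) (ha : ∀ x, 0 ≤ a x) {κ : ℝ} (hκ : 0 < κ)
    (hgap : ∀ x, κ ≤ a x - a (x + 1) + b (x + 1) - b x) : Tendsto b atTop atTop := by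
  refine tendsto_atTop_mono (fun x => ?_) <|
    tendsto_atTop_add_const_right _ (-a 0) (tendsto_natCast_atTop_atTop.const_mul_atTop hκ)
  linarith [le_sub_add_of_gap hb0 hgap x, ha x]

lemma exists_bddFun_psi2UpsBD_lt (hb0 : b 0 = 0) (ha : ∀ x, 0 ≤ a x)
    (hamono : ∀ x, a (x + 1) ≤ a x) {κ : ℝ} (hκ : 0 < κ)
    (hgap : ∀ x, κ ≤ a x - a (x + 1) + b (x + 1) - b x) {n : ℝ} (hn : 0 < n) :
    ∃ f, BddFun f ∧ ∃ x, 0 < -genBD a b f x ∧ psi2UpsBD a b f x < 1 / n * genBD a b f x ^ 2 := by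
  set s := √n
  have hs : 0 < s := sqrt_pos.2 hn
  obtain ⟨k, hk⟩ := (((tendsto_atTop_of_gap hb0 ha hκ hgap).comp (tendsto_add_atTop_nat 1)
    ).eventually_gt_atTop (a 0 * exp s)).exists
  have hbk : 0 < b (k + 1) := lt_of_le_of_lt (mul_nonneg (ha 0) (exp_pos s).le) hk
  have hak : a k * exp s < b (k + 1) := lt_of_le_of_lt
    (mul_le_mul_of_nonneg_right (antitone_nat_of_succ_le hamono k.zero_le) (exp_pos s).le) hk
  refine ⟨stepFun s k, bddFun_stepFun s k, k + 1, ?_, ?_⟩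
  · rw [genBD_stepFun_succ, neg_neg]
    positivity
  · calc psi2UpsBD a b (stepFun s k) (k + 1)
        ≤ b (k + 1) * (a k * exp s + b (k + 1)) / 2 := psi2UpsBD_stepFun_succ_le a b hs.le ha hbk.le
      _ < b (k + 1) ^ 2 := by rw [sq]; linarith [mul_lt_mul_of_pos_left hak hbk]
      _ = 1 / n * genBD a b (stepFun s k) (k + 1) ^ 2 := by
        rw [genBD_stepFun_succ, neg_sq, mul_pow, sq_sqrt hn.le]
        field_simp

end BirthDeath

theorem stmt_15_general (a b : ℕ → ℝ) (hb0 : b 0 = 0)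
    (hapos : ∀ x : ℕ, 0 < a x)
    (hamono : ∀ x : ℕ, a (x + 1) ≤ a x)
    (κ : ℝ) (hκ : 0 < κ)
    (hgap : ∀ x : ℕ, κ ≤ a x - a (x + 1) + b (x + 1) - b x) :
    (¬ ∃ n : ℝ, 1 ≤ n ∧ ∀ f : ℕ → ℝ, BddFun f → ∀ x : ℕ,
        0 < -genBD a b f x → 1 / n * genBD a b f x ^ 2 ≤ psi2UpsBD a b f x)
    ∧ (¬ ∃ n : ℝ, 1 ≤ n ∧ ∀ f : ℕ → ℝ, BddFun f → ∀ x : ℕ,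
        1 / n * max (-genBD a b f x) 0 ^ 2 ≤ psi2UpsBD a b f x) := by
  have hviolation {n : ℝ} (hn : 1 ≤ n) := exists_bddFun_psi2UpsBD_lt hb0 (fun x => (hapos x).le)
    hamono hκ hgap (zero_lt_one.trans_le hn)
  constructor
  · rintro ⟨n, hn, hCD⟩
    obtain ⟨f, hf, x, hpos, hlt⟩ := hviolation hn
    exact (hCD f hf x hpos).not_gt hlt
  · rintro ⟨n, hn, hCD⟩
    obtain ⟨f, hf, x, hpos, hlt⟩ := hviolation hn
    have hx := hCD f hf x
    rw [max_eq_left hpos.le, neg_sq] at hx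
    exact hx.not_gt hlt

/-- Example 2.10: a birth-death process with monotone rates and uniform positive
curvature gap satisfies no finite-dimensional condition `CD_Υ(0,n)` — not even with
the dimension term required only at points where `-Lf(x) > 0`. -/
theorem stmt_15 (a b : ℕ → ℝ) (hb0 : b 0 = 0) (hbpos : ∀ x : ℕ, 1 ≤ x → 0 < b x)
    (hapos : ∀ x : ℕ, 0 < a x)
    (hamono : ∀ x : ℕ, a (x + 1) ≤ a x) (hbmono : ∀ x : ℕ, b x ≤ b (x + 1))
    (κ : ℝ) (hκ : 0 < κ)
    (hgap : ∀ x : ℕ, κ ≤ a x - a (x + 1) + b (x + 1) - b x) :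
    (¬ ∃ n : ℝ, 1 ≤ n ∧ ∀ f : ℕ → ℝ, BddFun f → ∀ x : ℕ,
        0 < -genBD a b f x → 1 / n * genBD a b f x ^ 2 ≤ psi2UpsBD a b f x)
    ∧ (¬ ∃ n : ℝ, 1 ≤ n ∧ ∀ f : ℕ → ℝ, BddFun f → ∀ x : ℕ,
        1 / n * max (-genBD a b f x) 0 ^ 2 ≤ psi2UpsBD a b f x) :=
  stmt_15_general a b hb0 hapos hamono κ hκ hgap
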